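/- Let X, Y be two-dimensional smooth real Banach spaces with Y strictly convex. Let T : X → Y have rank 2, ‖T‖ = 1, and norm attainment set M_T = {±x}. Let y be a unit vector with x ⊥_B y, let k = ‖Ty‖ (so 0 < k < 1), and let w = Ty/‖Ty‖. If (x, Tx) is a μ-CPP with respect to (y, w) for some μ > k, then T is not an extreme contraction. -/

import Mathlib

/-!
Since `dim X = 2`, `X` is spanned by `x` and `y`; let `f` be the functional with `f x = 0`,
`f y = 1` and `G = f.smulRight w`. On a unit vector `u = a • x + b • y` near `x`, `T + δ • G` takes
the value `a • T x + (b * (k + δ)) • w`, which for `0 ≤ k + δ ≤ μ` lies on the segment from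
`a • T x` to `a • T x + (b * μ) • w`; both ends are in the unit ball, by `|a| ≤ 1` (Birkhoff–James
orthogonality) and by the `μ`-CPP. Near `-x` use `u ↦ -u`. Away from `±x`, compactness of the
unit sphere and `M_T = {±x}` give `‖T u‖ ≤ c < 1`, which absorbs a small perturbation. So
`T ± ε • G` lie in the unit ball for some `ε > 0`, and `T` is their midpoint.
-/

open Metric

/-- Birkhoff-James orthogonality: `x ⊥_B y` iff `‖x + t y‖ ≥ ‖x‖` for all real `t`. -/
def BJOrth {X : Type*} [NormedAddCommGroup X] [NormedSpace ℝ X] (x y : X) : Prop :=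
  ∀ t : ℝ, ‖x‖ ≤ ‖x + t • y‖

/-- `(x, y)` is a compatible point pair with constant `(r, μ)`. -/
def IsCPPConst {X Y : Type*} [NormedAddCommGroup X] [NormedSpace ℝ X]
    [NormedAddCommGroup Y] [NormedSpace ℝ Y] (x : X) (y : Y) (r μ : ℝ) : Prop :=
  ∀ z : X, ‖z‖ = 1 → BJOrth x z → ∀ w : Y, ‖w‖ = 1 → BJOrth y w →
    ∀ a b : ℝ, ‖a • x + b • z - x‖ ≤ r → ‖a • x + b • z‖ = 1 →
      ‖a • y + (b * μ) • w‖ ≤ 1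

/-- `(x, y)` is a compatible point pair (CPP). -/
def IsCPP {X Y : Type*} [NormedAddCommGroup X] [NormedSpace ℝ X]
    [NormedAddCommGroup Y] [NormedSpace ℝ Y] (x : X) (y : Y) : Prop :=
  ∃ r > 0, ∃ μ > 0, IsCPPConst x y r μ

/-- `(x, y)` is a weakly compatible point pair (weak CPP). -/
def IsWeakCPP {X Y : Type*} [NormedAddCommGroup X] [NormedSpace ℝ X]
    [NormedAddCommGroup Y] [NormedSpace ℝ Y] (x : X) (y : Y) : Prop :=
  ∃ z : X, ‖z‖ = 1 ∧ BJOrth x z ∧ ∃ w : Y, ‖w‖ = 1 ∧ BJOrth y w ∧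
    ∃ r > 0, ∃ μ > 0, ∀ a b : ℝ, ‖a • x + b • z - x‖ ≤ r → ‖a • x + b • z‖ = 1 →
      ‖a • y + (b * μ) • w‖ ≤ 1

/-- A normed space is smooth if every unit vector has a unique supporting functional. -/
def SmoothSp (X : Type*) [NormedAddCommGroup X] [NormedSpace ℝ X] : Prop :=
  ∀ x : X, ‖x‖ = 1 → ∃! f : X →L[ℝ] ℝ, ‖f‖ = 1 ∧ f x = 1

/-- `(x, y')` is a `μ`-CPP with respect to the pair `(z, w)`. -/
def IsMuCPP {X Y : Type*} [NormedAddCommGroup X] [NormedSpace ℝ X]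
    [NormedAddCommGroup Y] [NormedSpace ℝ Y] (x : X) (y' : Y) (z : X) (w : Y) (μ : ℝ) : Prop :=
  ∃ r > 0, ∀ a b : ℝ, ‖a • x + b • z - x‖ ≤ r → ‖a • x + b • z‖ = 1 →
    ‖a • y' + (b * μ) • w‖ ≤ 1

section

variable {X Y : Type*} [NormedAddCommGroup X] [NormedSpace ℝ X]
  [NormedAddCommGroup Y] [NormedSpace ℝ Y]

theorem BJOrth.abs_mul_norm_le {x y : X} (h : BJOrth x y) (a b : ℝ) :
    |a| * ‖x‖ ≤ ‖a • x + b • y‖ := by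
  rcases eq_or_ne a 0 with rfl | ha
  · simp
  calc |a| * ‖x‖ ≤ |a| * ‖x + (b / a) • y‖ := mul_le_mul_of_nonneg_left (h _) (abs_nonneg a)
    _ = ‖a • x + b • y‖ := by
      rw [← Real.norm_eq_abs, ← norm_smul, smul_add, smul_smul, mul_div_cancel₀ _ ha]

theorem BJOrth.linearIndependent {x y : X} (h : BJOrth x y) (hx : x ≠ 0) (hy : y ≠ 0) :
    LinearIndependent ℝ ![x, y] := by
  refine linearIndependent_fin2.mpr ⟨hy, fun a (hax : a • y = x) => hx ?_⟩
  have := h.abs_mul_norm_le 1 (-a)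
  rw [neg_smul, hax, one_smul, add_neg_cancel, norm_zero, abs_one, one_mul] at this
  exact norm_le_zero_iff.mp this

theorem LinearMap.injective_of_finrank_range_eq {K V W : Type*} [DivisionRing K]
    [AddCommGroup V] [Module K V] [AddCommGroup W] [Module K W] [FiniteDimensional K V]
    (f : V →ₗ[K] W) (h : Module.finrank K (range f) = Module.finrank K V) :
    Function.Injective f := by
  have := f.finrank_range_add_finrank_ker
  rw [← ker_eq_bot, ← Submodule.finrank_eq_zero]
  omega

theorem exists_coords_of_linearIndependent_pair [FiniteDimensional ℝ X]
    (hdX : Module.finrank ℝ X = 2) {x y : X} (h : LinearIndependent ℝ ![x, y]) :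
    (∀ u : X, ∃ a b : ℝ, a • x + b • y = u) ∧ ∃ f : X →L[ℝ] ℝ, f x = 0 ∧ f y = 1 := by
  let B := basisOfLinearIndependentOfCardEqFinrank h (by simp [hdX])
  have hB : ⇑B = ![x, y] := coe_basisOfLinearIndependentOfCardEqFinrank h _
  refine ⟨fun u => ⟨B.repr u 0, B.repr u 1, ?_⟩, (B.coord 1).toContinuousLinearMap, ?_, ?_⟩
  · conv_rhs => rw [← B.sum_repr u]
    simp [Fin.sum_univ_two, hB]
  · rw [show x = B 0 by simp [hB]]
    simp
  · rw [show y = B 1 by simp [hB]]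
    simp

theorem IsCompact.exists_lt_forall_le_of_forall_lt {α β : Type*} [TopologicalSpace α]
    [LinearOrder β] [TopologicalSpace β] [ClosedIciTopology β] [NoMinOrder β] {K : Set α}
    (hK : IsCompact K) {f : α → β} (hf : ContinuousOn f K) {a : β} (h : ∀ u ∈ K, f u < a) :
    ∃ c < a, ∀ u ∈ K, f u ≤ c := by
  rcases K.eq_empty_or_nonempty with rfl | hne
  · obtain ⟨c, hc⟩ := exists_lt a
    exact ⟨c, hc, by simp⟩
  obtain ⟨u₀, hu₀, hmax⟩ := hK.exists_isMaxOn hne hf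
  exact ⟨f u₀, h u₀ hu₀, hmax⟩

theorem ContinuousLinearMap.exists_norm_apply_le_lt_one_of_far [FiniteDimensional ℝ X]
    {T : X →L[ℝ] Y} (hT : ‖T‖ ≤ 1) {x : X} (hM : ∀ u, ‖u‖ = 1 → ‖T u‖ = 1 → u = x ∨ u = -x)
    {r : ℝ} (hr : 0 < r) :
    ∃ c < 1, ∀ u, ‖u‖ = 1 → r ≤ ‖u - x‖ → r ≤ ‖u + x‖ → ‖T u‖ ≤ c := by
  set K := sphere (0 : X) 1 ∩ {u | r ≤ ‖u - x‖} ∩ {u | r ≤ ‖u + x‖}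
  have hK : IsCompact K :=
    ((isCompact_sphere 0 1).inter_right
      (isClosed_le continuous_const (continuous_id.sub continuous_const).norm)).inter_right
      (isClosed_le continuous_const (continuous_id.add continuous_const).norm)
  have hlt : ∀ u ∈ K, ‖T u‖ < 1 := by
    rintro u ⟨⟨hu, h₁ : r ≤ ‖u - x‖⟩, h₂ : r ≤ ‖u + x‖⟩
    have hu : ‖u‖ = 1 := by simpa using hu
    refine ((T.le_of_opNorm_le hT u).trans_eq (by rw [hu, one_mul])).lt_of_ne fun hTu => ?_
    rcases hM u hu hTu with rfl | rfl
    · simp only [sub_self, norm_zero] at h₁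
      linarith
    · simp only [neg_add_cancel, norm_zero] at h₂
      linarith
  obtain ⟨c, hc, hcK⟩ :=
    hK.exists_lt_forall_le_of_forall_lt (continuous_norm.comp T.continuous).continuousOn hlt
  exact ⟨c, hc, fun u hu h₁ h₂ => hcK u ⟨⟨by simpa using hu, h₁⟩, h₂⟩⟩

theorem norm_add_smul_le_of_norm_add_smul_le {p q : Y} {R μ t : ℝ} (hp : ‖p‖ ≤ R)
    (hpq : ‖p + μ • q‖ ≤ R) (ht : 0 ≤ t) (htμ : t ≤ μ) : ‖p + t • q‖ ≤ R := by
  have := (convex_closedBall (0 : Y) R).add_smul_mem (mem_closedBall_zero_iff.mpr hp)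
    (mem_closedBall_zero_iff.mpr hpq) (t := t / μ)
    ⟨div_nonneg ht (ht.trans htμ), div_le_one_of_le₀ htμ (ht.trans htμ)⟩
  rwa [smul_smul, div_mul_cancel_of_imp (fun h => le_antisymm (h ▸ htμ) ht),
    mem_closedBall_zero_iff] at this

theorem ContinuousLinearMap.opNorm_le_of_unit_norm_near_or_far (S : X →L[ℝ] Y) (x : X) (r : ℝ)
    {C : ℝ} (hC : 0 ≤ C) (hnear : ∀ u, ‖u‖ = 1 → ‖u - x‖ ≤ r → ‖S u‖ ≤ C)
    (hfar : ∀ u, ‖u‖ = 1 → r ≤ ‖u - x‖ → r ≤ ‖u + x‖ → ‖S u‖ ≤ C) : ‖S‖ ≤ C := by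
  refine S.opNorm_le_of_unit_norm hC fun u hu => ?_
  rcases le_total ‖u - x‖ r with h₁ | h₁
  · exact hnear u hu h₁
  rcases le_total ‖u + x‖ r with h₂ | h₂
  · simpa using hnear (-u) (by simpa) (by rwa [← neg_add', norm_neg])
  · exact hfar u hu h₁ h₂

theorem notMem_extremePoints_of_add_mem_of_sub_mem {𝕜 E : Type*} [Field 𝕜] [LinearOrder 𝕜]
    [IsStrictOrderedRing 𝕜] [AddCommGroup E] [Module 𝕜 E] {A : Set E} {x v : E} (hv : v ≠ 0)
    (h₁ : x + v ∈ A) (h₂ : x - v ∈ A) : x ∉ A.extremePoints 𝕜 := by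
  intro hx
  have hseg : x ∈ openSegment 𝕜 (x + v) (x - v) :=
    ⟨1 / 2, 1 / 2, by norm_num, by norm_num, by norm_num, by module⟩
  exact hv (add_eq_left.mp (hx.2 h₁ h₂ hseg))

theorem norm_add_smul_smulRight_le_one {T : X →L[ℝ] Y} (hT : ‖T‖ ≤ 1) {x y : X}
    (hx : ‖x‖ = 1) (hxy : BJOrth x y) (hspan : ∀ u : X, ∃ a b : ℝ, a • x + b • y = u)
    {f : X →L[ℝ] ℝ} (hfx : f x = 0) (hfy : f y = 1) {w : Y} (hw : ‖w‖ = 1) {k μ r c δ : ℝ}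
    (hTy : T y = k • w)
    (hnear : ∀ a b : ℝ, ‖a • x + b • y - x‖ ≤ r → ‖a • x + b • y‖ = 1 →
      ‖a • T x + (b * μ) • w‖ ≤ 1)
    (hfar : ∀ u, ‖u‖ = 1 → r ≤ ‖u - x‖ → r ≤ ‖u + x‖ → ‖T u‖ ≤ c)
    (hδk : |δ| ≤ k) (hδμ : |δ| ≤ μ - k) (hδc : |δ| * ‖f‖ ≤ 1 - c) :
    ‖T + δ • f.smulRight w‖ ≤ 1 := by
  refine (T + δ • f.smulRight w).opNorm_le_of_unit_norm_near_or_far x r zero_le_one ?_ ?_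
  · intro u hu hur
    obtain ⟨a, b, rfl⟩ := hspan u
    have happly : (T + δ • f.smulRight w) (a • x + b • y) = a • T x + (k + δ) • (b • w) := by
      simp only [add_apply, smul_apply, ContinuousLinearMap.smulRight_apply, map_add, map_smul,
        hTy, hfx, hfy, smul_smul, mul_zero, mul_one]
      module
    have ha : |a| ≤ 1 := by simpa [hx, hu] using hxy.abs_mul_norm_le a b
    have haTx : ‖a • T x‖ ≤ 1 := by
      rw [norm_smul, Real.norm_eq_abs]
      exact mul_le_one₀ ha (norm_nonneg _) ((T.le_of_opNorm_le hT x).trans_eq (by simp [hx]))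
    rw [happly]
    refine norm_add_smul_le_of_norm_add_smul_le (μ := μ) haTx ?_ (by linarith [neg_abs_le δ])
      (by linarith [le_abs_self δ])
    rw [smul_smul, mul_comm]
    exact hnear a b hur hu
  · intro u hu h₁ h₂
    calc ‖(T + δ • f.smulRight w) u‖ ≤ ‖T u‖ + |δ| * ‖f u‖ := by
          simpa [norm_smul, hw] using norm_add_le (T u) (δ • f u • w)
      _ ≤ c + |δ| * ‖f‖ := by
          gcongr
          · exact hfar u hu h₁ h₂
          · simpa [hu] using f.le_opNorm u
      _ ≤ 1 := by linarith

end

theorem stmt13_general {X Y : Type*} [NormedAddCommGroup X] [NormedSpace ℝ X]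
    [NormedAddCommGroup Y] [NormedSpace ℝ Y]
    [FiniteDimensional ℝ X]
    (hdX : Module.finrank ℝ X = 2) (T : X →L[ℝ] Y) (hT : ‖T‖ = 1)
    (hrank : Module.rank ℝ (LinearMap.range (T : X →ₗ[ℝ] Y)) = 2)
    (x : X) (hx : ‖x‖ = 1) (hM : {u : X | ‖u‖ = 1 ∧ ‖T u‖ = 1} = {x, -x})
    (y : X) (hy : ‖y‖ = 1) (hxy : BJOrth x y)
    (μ : ℝ) (hμ : ‖T y‖ < μ)
    (hcpp : IsMuCPP x (T x) y ((‖T y‖)⁻¹ • T y) μ) :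
    T ∉ Set.extremePoints ℝ (closedBall (0 : X →L[ℝ] Y) 1) := by
  have hinj : Function.Injective T := (T : X →ₗ[ℝ] Y).injective_of_finrank_range_eq
    (by rw [hdX]; exact Module.finrank_eq_of_rank_eq hrank)
  have hy₀ : y ≠ 0 := norm_ne_zero_iff.mp (by simp [hy])
  have hTy₀ : T y ≠ 0 := (map_ne_zero_iff T hinj).mpr hy₀
  have hk : 0 < ‖T y‖ := norm_pos_iff.mpr hTy₀
  obtain ⟨hspan, f, hfx, hfy⟩ := exists_coords_of_linearIndependent_pair hdX
    (hxy.linearIndependent (norm_ne_zero_iff.mp (by simp [hx])) hy₀)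
  obtain ⟨r, hr, hnear⟩ := hcpp
  obtain ⟨c, hc, hfar⟩ := T.exists_norm_apply_le_lt_one_of_far hT.le
    (fun u hu hTu => by simpa using hM.subset ⟨hu, hTu⟩) hr
  obtain ⟨ε₀, hε₀, hε₀f⟩ := exists_pos_mul_lt (sub_pos.mpr hc) ‖f‖
  set ε := min (min ‖T y‖ (μ - ‖T y‖)) ε₀
  set G := f.smulRight ((‖T y‖)⁻¹ • T y)
  have hball : ∀ δ, |δ| = ε → ‖T + δ • G‖ ≤ 1 := fun δ hδ =>
    norm_add_smul_smulRight_le_one hT.le hx hxy hspan hfx hfy (norm_smul_inv_norm hTy₀)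
      (smul_inv_smul₀ hk.ne' _).symm hnear hfar
      (hδ ▸ (min_le_left _ _).trans (min_le_left _ _))
      (hδ ▸ (min_le_left _ _).trans (min_le_right _ _))
      (hδ ▸ (mul_le_mul_of_nonneg_right (min_le_right _ _) (norm_nonneg f)).trans
        (by linarith))
  have hε : 0 < ε := lt_min (lt_min hk (sub_pos.mpr hμ)) hε₀
  refine notMem_extremePoints_of_add_mem_of_sub_mem (v := ε • G) ?_ ?_ ?_
  · refine fun h => smul_ne_zero hε.ne' (smul_ne_zero (inv_ne_zero hk.ne') hTy₀) ?_
    simpa [G, hfy] using congr(($h) y)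
  · simpa using hball ε (abs_of_pos hε)
  · simpa [sub_eq_add_neg] using hball (-ε) (by simp [hε.le])

theorem stmt13 {X Y : Type*} [NormedAddCommGroup X] [NormedSpace ℝ X]
    [NormedAddCommGroup Y] [NormedSpace ℝ Y] [StrictConvexSpace ℝ Y]
    [FiniteDimensional ℝ X] [FiniteDimensional ℝ Y]
    (hdX : Module.finrank ℝ X = 2) (hdY : Module.finrank ℝ Y = 2)
    (hX : SmoothSp X) (hY : SmoothSp Y) (T : X →L[ℝ] Y) (hT : ‖T‖ = 1)
    (hrank : Module.rank ℝ (LinearMap.range (T : X →ₗ[ℝ] Y)) = 2)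
    (x : X) (hx : ‖x‖ = 1) (hM : {u : X | ‖u‖ = 1 ∧ ‖T u‖ = 1} = {x, -x})
    (y : X) (hy : ‖y‖ = 1) (hxy : BJOrth x y)
    (μ : ℝ) (hμ : ‖T y‖ < μ)
    (hcpp : IsMuCPP x (T x) y ((‖T y‖)⁻¹ • T y) μ) :
    T ∉ Set.extremePoints ℝ (closedBall (0 : X →L[ℝ] Y) 1) :=
  stmt13_general hdX T hT hrank x hx hM y hy hxy μ hμ hcpp
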